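/- For every positive integer s, the set S⁻¹({s}) = {x ∈ ℕ : S(x) = s} is nonempty; moreover, letting ξ_s denote its minimum, P(ξ_{s+1}) = ξ_s for every s ≥ 1. -/

import Mathlib

open scoped Classical

/-- The largest element of ℙ*₁ = ℙ* ∪ {1} (prime-powers together with 1) not exceeding `x`. -/
noncomputable def q (x : ℕ) : ℕ :=
  sSup {m : ℕ | (IsPrimePow m ∨ m = 1) ∧ m ≤ x}

/-- The prime-power map. -/
noncomputable def P (x : ℕ) : ℕ :=
  if x = 1 then 1
  else if IsPrimePow x then x / x.minFac
  else x - q x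

/-- The orbit of `x` under `P`: `orbit x 1 = x` and `orbit x (n+1) = P (orbit x n)`. -/
noncomputable def orbit (x n : ℕ) : ℕ := P^[n - 1] x

/-- The transient length `T x = min {n ≥ 1 : x_n = 1}`. -/
noncomputable def T (x : ℕ) : ℕ := sInf {n : ℕ | 1 ≤ n ∧ orbit x n = 1}

/-- The settling time `S x = min {n ≥ 1 : x_n ∈ ℙ*₁}`. -/
noncomputable def S (x : ℕ) : ℕ :=
  sInf {n : ℕ | 1 ≤ n ∧ (IsPrimePow (orbit x n) ∨ orbit x n = 1)}

/-- `xi s` is the smallest positive integer with settling time `s`. -/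
noncomputable def xi (s : ℕ) : ℕ := sInf {x : ℕ | 0 < x ∧ S x = s}

/-!
Outside ℙ*₁ the settling time satisfies `S x = S (P x) + 1`. The key observation is that if
`y ≥ 1` and `q z + y ≤ z`, then no element of ℙ*₁ lies in `(q z, q z + y]`, so `x = q z + y`
lies outside ℙ*₁, `q x = q z` and `P x = y`; hence `S x = S y + 1`.

Such a `z` exists for every `y`: with `n = ((y + 1)!)²`, each `n + k` with `2 ≤ k ≤ y + 1` is not
a prime power because `k² ∣ n`, so `z = n + y + 1` works. This gives every fibre of `S` by
induction. For the minimum, take `X = ξ_{s+1}`; since `S (P X) = s` we have `ξ_s ≤ P X`, so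
`z = X`, `y = ξ_s` satisfy `q X + ξ_s ≤ X`, and `q X + ξ_s` has settling time `s + 1`. Minimality
of `X` gives `X ≤ q X + ξ_s`, i.e. `P X ≤ ξ_s`.
-/

lemma bddAbove_q_set (x : ℕ) : BddAbove {m : ℕ | (IsPrimePow m ∨ m = 1) ∧ m ≤ x} :=
  ⟨x, fun _ hm => hm.2⟩

lemma q_spec {x : ℕ} (hx : 0 < x) : (IsPrimePow (q x) ∨ q x = 1) ∧ q x ≤ x :=
  Nat.sSup_mem (s := {m : ℕ | (IsPrimePow m ∨ m = 1) ∧ m ≤ x}) ⟨1, Or.inr rfl, hx⟩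
    (bddAbove_q_set x)

lemma le_q {m x : ℕ} (hm : IsPrimePow m ∨ m = 1) (hmx : m ≤ x) : m ≤ q x :=
  le_csSup (bddAbove_q_set x) ⟨hm, hmx⟩

lemma one_le_q {x : ℕ} (hx : 0 < x) : 1 ≤ q x :=
  le_q (Or.inr rfl) hx

lemma q_lt_self {x : ℕ} (hx : 0 < x) (h : ¬(IsPrimePow x ∨ x = 1)) : q x < x :=
  (q_spec hx).2.lt_of_ne fun he => h (he ▸ (q_spec hx).1)

lemma P_of_not_isPrimePow_or_eq_one {x : ℕ} (h : ¬(IsPrimePow x ∨ x = 1)) : P x = x - q x := by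
  rw [not_or] at h
  simp [P, h.1, h.2]

lemma P_pos {x : ℕ} (hx : 0 < x) : 0 < P x := by
  unfold P
  split_ifs with h1 h2
  · exact one_pos
  · exact Nat.div_pos (Nat.minFac_le hx) (Nat.minFac_pos x)
  · exact Nat.sub_pos_of_lt (q_lt_self hx (by tauto))

lemma P_lt_self {x : ℕ} (hx : 2 ≤ x) : P x < x := by
  unfold P
  split_ifs with h1 h2
  · omega
  · exact Nat.div_lt_self (by omega) (Nat.minFac_prime h1).one_lt
  · have := one_le_q (x := x) (by omega)
    omega

lemma orbit_succ (x : ℕ) {n : ℕ} (hn : 1 ≤ n) : orbit x (n + 1) = orbit (P x) n := by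
  obtain ⟨m, rfl⟩ := Nat.exists_eq_add_of_le' hn
  simp [orbit, Function.iterate_succ_apply]

lemma exists_orbit_settles {x : ℕ} (hx : 0 < x) :
    ∃ n, 1 ≤ n ∧ (IsPrimePow (orbit x n) ∨ orbit x n = 1) := by
  induction x using Nat.strong_induction_on with
  | _ x ih =>
    by_cases h : IsPrimePow x ∨ x = 1
    · exact ⟨1, le_rfl, h⟩
    · obtain ⟨n, hn, hsettle⟩ := ih (P x) (P_lt_self (by omega)) (P_pos hx)
      exact ⟨n + 1, by omega, by rwa [orbit_succ x hn]⟩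

lemma S_spec {x : ℕ} (hx : 0 < x) :
    1 ≤ S x ∧ (IsPrimePow (orbit x (S x)) ∨ orbit x (S x) = 1) :=
  Nat.sInf_mem (exists_orbit_settles hx)

lemma S_le {x n : ℕ} (hn : 1 ≤ n) (h : IsPrimePow (orbit x n) ∨ orbit x n = 1) : S x ≤ n :=
  Nat.sInf_le ⟨hn, h⟩

lemma S_eq_one {x : ℕ} (h : IsPrimePow x ∨ x = 1) : S x = 1 := by
  have hx : 0 < x := h.elim IsPrimePow.pos (· ▸ one_pos)
  exact le_antisymm (S_le le_rfl h) (S_spec hx).1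

lemma S_eq_succ {x : ℕ} (hx : 0 < x) (h : ¬(IsPrimePow x ∨ x = 1)) : S x = S (P x) + 1 := by
  obtain ⟨hPS, hPsettle⟩ := S_spec (P_pos hx)
  obtain ⟨hS, hsettle⟩ := S_spec hx
  have hS2 : 2 ≤ S x := by
    by_contra! hlt
    rw [show S x = 1 by omega] at hsettle
    exact h hsettle
  have hle : S x ≤ S (P x) + 1 := S_le (by omega) (by rwa [orbit_succ x hPS])
  have hge : S (P x) ≤ S x - 1 := S_le (by omega) <| by
    rwa [← orbit_succ x (by omega), Nat.sub_add_cancel hS]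
  omega

lemma not_isPrimePow_add_of_sq_dvd {n k : ℕ} (hn : 0 < n) (hk : 2 ≤ k) (hdvd : k ^ 2 ∣ n) :
    ¬IsPrimePow (n + k) := by
  rw [isPrimePow_nat_iff]
  rintro ⟨r, m, hr, -, hrm⟩
  have hkn : k ∣ n := (dvd_pow_self k two_ne_zero).trans hdvd
  obtain ⟨j, -, rfl⟩ := (Nat.dvd_prime_pow hr).1 (hrm ▸ dvd_add hkn dvd_rfl)
  have hj : 1 ≤ j := Nat.one_le_iff_ne_zero.2 fun h => by simp [h] at hk
  have hjm : j < m := (Nat.pow_lt_pow_iff_right hr.one_lt).1 (by omega)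
  have hn' : r ^ (j + 1) ∣ n :=
    (pow_dvd_pow r (by omega : j + 1 ≤ j * 2)).trans (by rwa [pow_mul])
  have hk' : r ^ (j + 1) ∣ r ^ j := by
    have := Nat.dvd_sub (pow_dvd_pow r hjm) hn'
    rwa [hrm, Nat.add_sub_cancel_left] at this
  exact absurd (Nat.le_of_dvd (pow_pos hr.pos j) hk')
    (not_le.2 (Nat.pow_lt_pow_succ hr.one_lt))

lemma exists_q_add_le (y : ℕ) : ∃ z, q z + y ≤ z := by
  set n := (y + 1).factorial ^ 2
  have hn : 0 < n := by positivity
  refine ⟨n + (y + 1), ?_⟩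
  obtain ⟨hmem, hle⟩ := q_spec (x := n + (y + 1)) (by omega)
  by_contra! hgap
  have hk : q (n + (y + 1)) - n ≤ y + 1 := by omega
  refine not_isPrimePow_add_of_sq_dvd hn (k := q (n + (y + 1)) - n) (by omega)
    (pow_dvd_pow_of_dvd (Nat.dvd_factorial (by omega) hk) 2) ?_
  rw [Nat.add_sub_cancel' (by omega)]
  exact hmem.resolve_right (by omega)

lemma not_isPrimePow_or_eq_one_q_add {y z : ℕ} (hy : 0 < y) (hz : q z + y ≤ z) :
    ¬(IsPrimePow (q z + y) ∨ q z + y = 1) :=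
  fun h => by have := le_q h hz; omega

lemma q_q_add {y z : ℕ} (hy : 0 < y) (hz : q z + y ≤ z) : q (q z + y) = q z := by
  have hz0 : 0 < z := by omega
  obtain ⟨hmem, hle⟩ := q_spec (x := q z + y) (by omega)
  exact le_antisymm (le_q hmem (hle.trans hz)) (le_q (q_spec hz0).1 (by omega))

lemma P_q_add {y z : ℕ} (hy : 0 < y) (hz : q z + y ≤ z) : P (q z + y) = y := by
  rw [P_of_not_isPrimePow_or_eq_one (not_isPrimePow_or_eq_one_q_add hy hz), q_q_add hy hz]
  omega

lemma S_q_add {y z : ℕ} (hy : 0 < y) (hz : q z + y ≤ z) : S (q z + y) = S y + 1 := by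
  rw [S_eq_succ (by omega) (not_isPrimePow_or_eq_one_q_add hy hz), P_q_add hy hz]

lemma exists_S_eq {s : ℕ} (hs : 1 ≤ s) : ∃ x, 0 < x ∧ S x = s := by
  induction s, hs using Nat.le_induction with
  | base => exact ⟨1, one_pos, S_eq_one (Or.inr rfl)⟩
  | succ s _ ih =>
    obtain ⟨y, hy, rfl⟩ := ih
    obtain ⟨z, hz⟩ := exists_q_add_le y
    exact ⟨q z + y, by omega, S_q_add hy hz⟩

theorem stmt_14 :
    (∀ s : ℕ, 1 ≤ s → {x : ℕ | 0 < x ∧ S x = s}.Nonempty) ∧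
    (∀ s : ℕ, 1 ≤ s → P (xi (s + 1)) = xi s) := by
  refine ⟨fun s hs => exists_S_eq hs, fun s hs => ?_⟩
  obtain ⟨hX, hSX⟩ : 0 < xi (s + 1) ∧ S (xi (s + 1)) = s + 1 :=
    Nat.sInf_mem (exists_S_eq (Nat.le_add_left 1 s))
  obtain ⟨hξ, hSξ⟩ : 0 < xi s ∧ S (xi s) = s := Nat.sInf_mem (exists_S_eq hs)
  set X := xi (s + 1)
  have hnot : ¬(IsPrimePow X ∨ X = 1) := fun h => by have := S_eq_one h; omega
  have hPX : P X = X - q X := P_of_not_isPrimePow_or_eq_one hnot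
  have hle : xi s ≤ P X :=
    Nat.sInf_le ⟨P_pos hX, by have := S_eq_succ hX hnot; omega⟩
  have hgap : q X + xi s ≤ X := by omega
  have hge : X ≤ q X + xi s :=
    Nat.sInf_le ⟨by omega, by rw [S_q_add hξ hgap, hSξ]⟩
  omega
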